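/- arXiv:1909.12863 — 4 statements merged into one kernel-verified Lean document; each statement's English description precedes it below -/
import Mathlib

section
/- Let G be a simple connected bipartite graph with |V(G)| ≥ 3. Then every circuit of P_fmat(G) with coprime integer components has all entries in {−1,0,1}, and its support is the edge set of an even cycle (with the circuit summing to 0 around every vertex of the cycle) or the edge set of a simple path (with the circuit summing to 0 at every internal vertex of the path). -/
noncomputable section

variable {V : Type*} [Fintype V] [DecidableEq V] (G : SimpleGraph V) [DecidableRel G.Adj]

/-- The sum of `g(e)` over the edges `e` incident to the vertex `v`
(i.e. `g(δ_G(v))` for a vector supported on the incident edges). -/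
def vsum {R : Type*} [AddCommMonoid R] (g : G.edgeSet → R) (v : V) : R :=
  ∑ e : G.edgeSet, if v ∈ (e : Sym2 V) then g e else 0

/-- Membership in the fractional matching polytope `P_fmat(G)`:
`x ≥ 0` and `x(δ_G(v)) ≤ 1` for every non-leaf vertex `v`. -/
def memPfmat (x : G.edgeSet → ℝ) : Prop :=
  (∀ e, 0 ≤ x e) ∧ ∀ v : V, G.degree v ≠ 1 → vsum G x v ≤ 1

/-- `supp(By) ⊆ supp(Bg)` for the constraint matrix `B` of `P_fmat(G)`, whose rows are the
degree constraints of the non-leaf vertices together with the nonnegativity rows `−I`. -/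
def SuppLE (y g : G.edgeSet → ℝ) : Prop :=
  (∀ e, y e ≠ 0 → g e ≠ 0) ∧
  (∀ v : V, G.degree v ≠ 1 → vsum G y v ≠ 0 → vsum G g v ≠ 0)

/-- `g` is a circuit of `P_fmat(G)`: `g ≠ 0` and `Bg` is support-minimal in
`{By : y ≠ 0}`, i.e. no nonzero `y` has `supp(By) ⊊ supp(Bg)`. -/
def IsCircuitFM (g : G.edgeSet → ℝ) : Prop :=
  g ≠ 0 ∧ ∀ y : G.edgeSet → ℝ, y ≠ 0 → ¬ (SuppLE G y g ∧ ¬ SuppLE G g y)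

/-- The set `C(P_fmat(G))` of circuits of `P_fmat(G)` with coprime integer components. -/
def CircFM : Set (G.edgeSet → ℤ) :=
  {g | Finset.univ.gcd (fun e => (g e).natAbs) = 1 ∧
       IsCircuitFM G (fun e => ((g e : ℤ) : ℝ))}

/-- `C₁`: vectors with entries `±1` supported on an even cycle, summing to `0`
around every vertex. -/
def C1 : Set (G.edgeSet → ℤ) :=
  {g | ∃ (u : V) (c : G.Walk u u), c.IsCycle ∧ Even c.length ∧
       (∀ e : G.edgeSet, g e ≠ 0 ↔ (e : Sym2 V) ∈ c.edges) ∧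
       (∀ e : G.edgeSet, (e : Sym2 V) ∈ c.edges → g e = 1 ∨ g e = -1) ∧
       (∀ v : V, vsum G g v = 0)}

/-- `C₂`: vectors with entries `±1` supported on an odd cycle, summing to `0` around every
vertex except exactly one. -/
def C2 : Set (G.edgeSet → ℤ) :=
  {g | ∃ (u : V) (c : G.Walk u u), c.IsCycle ∧ Odd c.length ∧
       (∀ e : G.edgeSet, g e ≠ 0 ↔ (e : Sym2 V) ∈ c.edges) ∧
       (∀ e : G.edgeSet, (e : Sym2 V) ∈ c.edges → g e = 1 ∨ g e = -1) ∧
       (∃! w : V, vsum G g w ≠ 0)}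

/-- `C₃`: vectors with entries `±1` supported on a (nonempty) simple path, summing to `0`
at every internal vertex of the path. -/
def C3 : Set (G.edgeSet → ℤ) :=
  {g | ∃ (u w : V) (p : G.Walk u w), p.IsPath ∧ 0 < p.length ∧
       (∀ e : G.edgeSet, g e ≠ 0 ↔ (e : Sym2 V) ∈ p.edges) ∧
       (∀ e : G.edgeSet, (e : Sym2 V) ∈ p.edges → g e = 1 ∨ g e = -1) ∧
       (∀ v : V, v ∈ p.support → v ≠ u → v ≠ w → vsum G g v = 0)}

/-- `C₄`: vectors supported on the union of an odd cycle `c` and a nonempty simple path `p`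
meeting the cycle exactly at one endpoint of the path, with entries `±1` on the cycle and
`±2` on the path, summing to `0` at every vertex of degree at least `2` in the union
(i.e. at every vertex except the free endpoint `w` of the path). -/
def C4 : Set (G.edgeSet → ℤ) :=
  {g | ∃ (u w : V) (c : G.Walk u u) (p : G.Walk u w),
       c.IsCycle ∧ Odd c.length ∧ p.IsPath ∧ 0 < p.length ∧
       (∀ v : V, v ∈ c.support → v ∈ p.support → v = u) ∧
       (∀ e : G.edgeSet, g e ≠ 0 ↔ ((e : Sym2 V) ∈ c.edges ∨ (e : Sym2 V) ∈ p.edges)) ∧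
       (∀ e : G.edgeSet, (e : Sym2 V) ∈ c.edges → g e = 1 ∨ g e = -1) ∧
       (∀ e : G.edgeSet, (e : Sym2 V) ∈ p.edges → g e = 2 ∨ g e = -2) ∧
       (∀ v : V, v ≠ w → vsum G g v = 0)}

/-- `C₅`: vectors supported on the union of two odd cycles joined by a (possibly empty)
simple path — if the path is nonempty the cycles are node-disjoint and the path meets each
cycle exactly at one of its endpoints; if the path is empty the two cycles share exactly
one vertex — with entries `±1` on the cycles, `±2` on the path, summing to `0` at every
vertex. -/
def C5 : Set (G.edgeSet → ℤ) :=
  {g | (∀ v : V, vsum G g v = 0) ∧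
    ((∃ (u w : V) (c₁ : G.Walk u u) (c₂ : G.Walk w w) (p : G.Walk u w),
        c₁.IsCycle ∧ Odd c₁.length ∧ c₂.IsCycle ∧ Odd c₂.length ∧
        p.IsPath ∧ 0 < p.length ∧
        (∀ v : V, v ∈ c₁.support → v ∉ c₂.support) ∧
        (∀ v : V, v ∈ c₁.support → v ∈ p.support → v = u) ∧
        (∀ v : V, v ∈ c₂.support → v ∈ p.support → v = w) ∧
        (∀ e : G.edgeSet, g e ≠ 0 ↔
          ((e : Sym2 V) ∈ c₁.edges ∨ (e : Sym2 V) ∈ c₂.edges ∨ (e : Sym2 V) ∈ p.edges)) ∧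
        (∀ e : G.edgeSet, (e : Sym2 V) ∈ c₁.edges ∨ (e : Sym2 V) ∈ c₂.edges →
          g e = 1 ∨ g e = -1) ∧
        (∀ e : G.edgeSet, (e : Sym2 V) ∈ p.edges → g e = 2 ∨ g e = -2)) ∨
     (∃ (u : V) (c₁ c₂ : G.Walk u u),
        c₁.IsCycle ∧ Odd c₁.length ∧ c₂.IsCycle ∧ Odd c₂.length ∧
        (∀ v : V, v ∈ c₁.support → v ∈ c₂.support → v = u) ∧
        (∀ e : G.edgeSet, g e ≠ 0 ↔
          ((e : Sym2 V) ∈ c₁.edges ∨ (e : Sym2 V) ∈ c₂.edges)) ∧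
        (∀ e : G.edgeSet, (e : Sym2 V) ∈ c₁.edges ∨ (e : Sym2 V) ∈ c₂.edges →
          g e = 1 ∨ g e = -1)))}

/-! If the support of the circuit `g` contains a cycle `C`, then `C` is even because `G` is
bipartite, and the `±1` vector alternating along `C` has all vertex sums zero, so its `B`-support
lies in that of `g`. Minimality of `g` makes the two equal: `g` vanishes off `C` and at every
vertex, which forces `g` to alternate along `C`. Otherwise the support of `g` is a forest, and the
endpoints of a longest path `P` in it are leaves of the support, where the vertex sums of `g` are
nonzero. The alternating vector on `P` is then dominated by `g` in the same sense, and the same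
argument makes `g` alternate along `P`. Coprimality of the entries makes the alternating value
`±1`. -/

open SimpleGraph Walk

section

variable {G}

section VertexSums

variable {R : Type*}

lemma vsum_add [AddCommMonoid R] (h₁ h₂ : G.edgeSet → R) (x : V) :
    vsum G (h₁ + h₂) x = vsum G h₁ x + vsum G h₂ x := by
  simp only [vsum, Pi.add_apply, ← Finset.sum_add_distrib, ite_add_ite, add_zero]

lemma vsum_sub [AddCommGroup R] (h₁ h₂ : G.edgeSet → R) (x : V) :
    vsum G (h₁ - h₂) x = vsum G h₁ x - vsum G h₂ x := by
  simp only [vsum, Pi.sub_apply, ← Finset.sum_sub_distrib, ite_sub_ite, sub_zero]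

lemma vsum_eq_zero [AddCommMonoid R] {h : G.edgeSet → R} {x : V}
    (hx : ∀ e : G.edgeSet, x ∈ (e : Sym2 V) → h e = 0) : vsum G h x = 0 :=
  Finset.sum_eq_zero fun e _ => ite_eq_right_iff.mpr (hx e)

lemma vsum_eq_of_unique [AddCommMonoid R] {h : G.edgeSet → R} {x : V} {e₀ : G.edgeSet}
    (hx : x ∈ (e₀ : Sym2 V)) (huniq : ∀ e : G.edgeSet, h e ≠ 0 → x ∈ (e : Sym2 V) → e = e₀) :
    vsum G h x = h e₀ := by
  rw [vsum, Finset.sum_eq_single e₀ (fun e _ hne => ?_) (by simp), if_pos hx]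
  exact ite_eq_right_iff.mpr fun hxe => by_contra fun h0 => hne (huniq e h0 hxe)

lemma vsum_indicator [AddCommMonoid R] {σ : Sym2 V} (hσ : σ ∈ G.edgeSet) (a : R) (x : V) :
    vsum G (fun e => if (e : Sym2 V) = σ then a else 0) x = if x ∈ σ then a else 0 := by
  rw [vsum, Finset.sum_eq_single ⟨σ, hσ⟩ (fun e _ hne => ?_) (by simp)]
  · simp
  · rw [if_neg fun h => hne (Subtype.ext h), ite_self]

@[simp, norm_cast]
lemma vsum_intCast [AddCommGroupWithOne R] (h : G.edgeSet → ℤ) (x : V) :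
    vsum G (fun e => (h e : R)) x = vsum G h x := by
  simp [vsum, apply_ite]

end VertexSums

section EdgeSupport

omit [Fintype V] [DecidableEq V] [DecidableRel G.Adj]

variable {R : Type*} [Zero R]

def edgeSupport (g : G.edgeSet → R) : Set (Sym2 V) :=
  {σ | ∃ h : σ ∈ G.edgeSet, g ⟨σ, h⟩ ≠ 0}

@[simp]
lemma coe_mem_edgeSupport {g : G.edgeSet → R} {e : G.edgeSet} :
    (e : Sym2 V) ∈ edgeSupport g ↔ g e ≠ 0 :=
  ⟨fun ⟨_, h⟩ => h, fun h => ⟨e.2, h⟩⟩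

end EdgeSupport

namespace SimpleGraph.Walk

section Flow

omit [Fintype V] [DecidableRel G.Adj]

variable {R : Type*} [AddCommGroup R]

def flow : {u w : V} → G.Walk u w → R → G.edgeSet → R
  | _, _, nil, _ => 0
  | _, _, cons (u := u) (v := v) _ p, s =>
      fun e => (if (e : Sym2 V) = s(u, v) then s else 0) + p.flow (-s) e

@[simp]
lemma flow_nil {u : V} (s : R) : (nil : G.Walk u u).flow s = 0 := rfl

lemma flow_cons {u v w : V} (h : G.Adj u v) (p : G.Walk v w) (s : R) (e : G.edgeSet) :
    (cons h p).flow s e = (if (e : Sym2 V) = s(u, v) then s else 0) + p.flow (-s) e :=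
  rfl

lemma flow_eq_zero_of_notMem {u w : V} (p : G.Walk u w) (s : R) {e : G.edgeSet}
    (he : (e : Sym2 V) ∉ p.edges) : p.flow s e = 0 := by
  induction p generalizing s with
  | nil => rfl
  | cons h p ih =>
    rw [edges_cons, List.mem_cons, not_or] at he
    rw [flow_cons, if_neg he.1, ih _ he.2, add_zero]

lemma flow_eq_or_eq_neg {u w : V} (p : G.Walk u w) (hp : p.edges.Nodup) (s : R)
    {e : G.edgeSet} (he : (e : Sym2 V) ∈ p.edges) : p.flow s e = s ∨ p.flow s e = -s := by
  induction p generalizing s with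
  | nil => simp at he
  | @cons a b _ h p ih =>
    rw [edges_cons, List.nodup_cons] at hp
    rw [flow_cons]
    by_cases he₀ : (e : Sym2 V) = s(a, b)
    · rw [if_pos he₀, flow_eq_zero_of_notMem p _ (he₀ ▸ hp.1), add_zero]
      exact Or.inl rfl
    · rw [if_neg he₀, zero_add, or_comm]
      simpa only [neg_neg] using ih hp.2 (-s) ((List.mem_cons.mp he).resolve_left he₀)

end Flow

section FlowSums

variable {R : Type*} [AddCommGroup R]

lemma vsum_flow_cons {u v w : V} (h : G.Adj u v) (p : G.Walk v w) (s : R) (x : V) :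
    vsum G ((cons h p).flow s) x = (if x ∈ s(u, v) then s else 0) + vsum G (p.flow (-s)) x := by
  rw [← vsum_indicator (G.mem_edgeSet.mpr h), ← vsum_add]
  rfl

lemma IsPath.vsum_flow {u w : V} {p : G.Walk u w} (hp : p.IsPath) (s : R) (x : V) :
    vsum G (p.flow s) x =
      (if x = u then s else 0) - if x = w then (-1 : ℤ) ^ p.length • s else 0 := by
  induction p generalizing s with
  | nil =>
    rw [flow_nil, vsum_eq_zero (h := 0) fun _ _ => rfl]
    split_ifs <;> simp
  | @cons u v w h q ih =>
    obtain ⟨hq, hu⟩ := (cons_isPath_iff h q).mp hp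
    have huv : u ≠ v := h.ne
    have huw : u ≠ w := fun huw => hu (huw ▸ q.end_mem_support)
    rw [vsum_flow_cons, ih hq, length_cons, pow_succ, mul_neg_one, neg_smul, smul_neg]
    by_cases hxu : x = u <;> by_cases hxv : x = v <;> by_cases hxw : x = w <;>
      simp_all [Sym2.mem_iff]

lemma IsCycle.vsum_flow {u : V} {c : G.Walk u u} (hc : c.IsCycle) (heven : Even c.length)
    (s : R) (x : V) : vsum G (c.flow s) x = 0 := by
  obtain ⟨v, h, q, rfl⟩ := not_nil_iff.mp hc.not_nil
  have hq : q.IsPath := ((cons_isCycle_iff q h).mp hc).1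
  have hodd : Odd q.length := by simpa [Nat.even_add_one] using heven
  have huv : u ≠ v := h.ne
  rw [vsum_flow_cons, hq.vsum_flow, hodd.neg_one_pow, neg_one_smul, neg_neg]
  by_cases hxu : x = u <;> by_cases hxv : x = v <;> simp_all [Sym2.mem_iff]

/-- The vanishing sum at each inner vertex forces the value of `a` on the next edge to be the
negative of that on the previous one. The hypothesis `hu` admits both a path (`u ∉ q.support`)
and a cycle (`u = w`). -/
lemma exists_eq_flow_cons {u v w : V} (h : G.Adj u v) {q : G.Walk v w} (hq : q.IsPath)
    (hu : u ∈ q.support → u = w) {a : G.edgeSet → R}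
    (ha : ∀ e : G.edgeSet, (e : Sym2 V) ∉ (cons h q).edges → a e = 0)
    (hz : ∀ x ∈ q.support, x ≠ w → vsum G a x = 0) :
    ∃ t, a = (cons h q).flow t := by
  induction q generalizing u a with
  | @nil v =>
    refine ⟨a ⟨s(u, v), h⟩, funext fun e => ?_⟩
    rw [flow_cons, flow_nil, Pi.zero_apply, add_zero]
    split_ifs with he
    · rw [show e = ⟨s(u, v), h⟩ from Subtype.ext he]
    · exact ha e (by simpa using he)
  | @cons v v' w h' q' ih =>
    obtain ⟨hq', hv⟩ := (cons_isPath_iff h' q').mp hq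
    have hvw : v ≠ w := fun hvw => hv (hvw ▸ q'.end_mem_support)
    set t := a ⟨s(u, v), h⟩
    set b : G.edgeSet → R := a - fun e : G.edgeSet => if (e : Sym2 V) = s(u, v) then t else 0
      with hb
    have hbsum (x : V) : vsum G b x = vsum G a x - if x ∈ s(u, v) then t else 0 := by
      rw [hb, vsum_sub, vsum_indicator h]
    have hb0 : ∀ e : G.edgeSet, (e : Sym2 V) ∉ (cons h' q').edges → b e = 0 := by
      intro e he
      by_cases he₀ : (e : Sym2 V) = s(u, v)
      · simp [hb, t, show e = ⟨s(u, v), h⟩ from Subtype.ext he₀]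
      · simp [hb, he₀, ha e (by simp_all)]
    have hbz : ∀ x ∈ q'.support, x ≠ w → vsum G b x = 0 := by
      intro x hx hxw
      have hxu : x ≠ u := by
        rintro rfl
        exact hxw (hu (List.mem_cons_of_mem _ hx))
      have hxv : x ≠ v := fun hxv => hv (hxv ▸ hx)
      rw [hbsum, hz x (List.mem_cons_of_mem _ hx) hxw, if_neg (by simp [Sym2.mem_iff, hxu, hxv])]
      simp
    obtain ⟨t', hbt'⟩ := ih h' hq' (fun hv' => absurd hv' hv) hb0 hbz
    have ht' : t' = -t := by
      have hsum := hbsum v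
      rw [hbt', hq.vsum_flow, if_pos rfl, if_neg hvw, hz v (start_mem_support _) hvw,
        if_pos (Sym2.mem_mk_right u v)] at hsum
      simpa using hsum
    refine ⟨t, funext fun e => ?_⟩
    rw [flow_cons, ← ht', ← hbt', hb]
    simp

lemma IsPath.exists_eq_flow {u w : V} {p : G.Walk u w} (hp : p.IsPath) {a : G.edgeSet → R}
    (ha : ∀ e : G.edgeSet, (e : Sym2 V) ∉ p.edges → a e = 0)
    (hz : ∀ x ∈ p.support, x ≠ u → x ≠ w → vsum G a x = 0) :
    ∃ t, a = p.flow t := by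
  cases p with
  | nil => exact ⟨0, funext fun e => ha e (by simp)⟩
  | cons h q =>
    obtain ⟨hq, hu⟩ := (cons_isPath_iff h q).mp hp
    refine exists_eq_flow_cons h hq (fun hu' => absurd hu' hu) ha fun x hx hxw => ?_
    exact hz x (List.mem_cons_of_mem _ hx) (fun hxu => hu (hxu ▸ hx)) hxw

lemma IsCycle.exists_eq_flow {u : V} {c : G.Walk u u} (hc : c.IsCycle) {a : G.edgeSet → R}
    (ha : ∀ e : G.edgeSet, (e : Sym2 V) ∉ c.edges → a e = 0) (hz : ∀ x, vsum G a x = 0) :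
    ∃ t, a = c.flow t := by
  obtain ⟨v, h, q, rfl⟩ := not_nil_iff.mp hc.not_nil
  exact exists_eq_flow_cons h ((cons_isCycle_iff q h).mp hc).1 (fun _ => rfl) ha
    fun x _ _ => hz x

end FlowSums

section Degree

omit [DecidableEq V]

lemma one_lt_degree_of_ncard_neighborSet {H : G.Subgraph} {v : V}
    (hH : (H.neighborSet v).ncard = 2) : 1 < G.degree v := by
  have hle := Set.ncard_le_ncard (H.neighborSet_subset v) (Set.toFinite _)
  rw [hH, Set.ncard_eq_toFinset_card', Set.toFinset_card, card_neighborSet_eq_degree] at hle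
  omega

lemma IsCycle.one_lt_degree {u v : V} {c : G.Walk u u} (hc : c.IsCycle) (hv : v ∈ c.support) :
    1 < G.degree v :=
  one_lt_degree_of_ncard_neighborSet (hc.ncard_neighborSet_toSubgraph_eq_two hv)

lemma IsPath.one_lt_degree {u v w : V} {p : G.Walk u w} (hp : p.IsPath) (hv : v ∈ p.support)
    (hvu : v ≠ u) (hvw : v ≠ w) : 1 < G.degree v := by
  obtain ⟨i, rfl, hi⟩ := mem_support_iff_exists_getVert.mp hv
  have hi0 : i ≠ 0 := by rintro rfl; exact hvu (getVert_zero p)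
  have hil : i < p.length := lt_of_le_of_ne hi fun hil => hvw (hil ▸ getVert_length p)
  exact one_lt_degree_of_ncard_neighborSet (hp.ncard_neighborSet_toSubgraph_internal_eq_two hi0 hil)

end Degree

section LongestPath

omit [Fintype V] [DecidableRel G.Adj]

def IsLongestPathIn (S : Set (Sym2 V)) {u w : V} (p : G.Walk u w) : Prop :=
  p.IsPath ∧ (∀ σ ∈ p.edges, σ ∈ S) ∧
    ∀ (a b : V) (q : G.Walk a b), q.IsPath → (∀ σ ∈ q.edges, σ ∈ S) → q.length ≤ p.length

variable {S : Set (Sym2 V)}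

omit [DecidableEq V] in
lemma IsLongestPathIn.reverse {u w : V} {p : G.Walk u w} (hp : p.IsLongestPathIn S) :
    p.reverse.IsLongestPathIn S := by
  obtain ⟨hpath, hpS, hmax⟩ := hp
  refine ⟨hpath.reverse, fun σ hσ => hpS σ ?_, fun a b q hq hqS => ?_⟩
  · rwa [edges_reverse, List.mem_reverse] at hσ
  · rw [length_reverse]
    exact hmax a b q hq hqS

lemma IsLongestPathIn.eq_snd (hS : ¬ ∃ (z : V) (c : G.Walk z z), c.IsCycle ∧ ∀ σ ∈ c.edges, σ ∈ S)
    {u w : V} {p : G.Walk u w} (hp : p.IsLongestPathIn S) {x : V} (hx : G.Adj u x)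
    (hxS : s(u, x) ∈ S) : x = p.snd := by
  obtain ⟨hpath, hpS, hmax⟩ := hp
  by_cases hxe : s(u, x) ∈ p.edges
  · exact (hpath.snd_of_toSubgraph_adj (Subgraph.mem_edgeSet.mp
      ((mem_edges_toSubgraph p).mpr hxe))).symm
  by_cases hxp : x ∈ p.support
  · -- closing `p.takeUntil x` with the edge `xu` gives a cycle in `S`
    refine absurd ⟨x, cons hx.symm (p.takeUntil x hxp), ?_, ?_⟩ hS
    · refine (cons_isCycle_iff _ _).mpr ⟨hpath.takeUntil hxp, fun h => hxe ?_⟩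
      exact Sym2.eq_swap ▸ edges_takeUntil_subset_edges p hxp h
    · intro σ hσ
      rw [edges_cons, List.mem_cons] at hσ
      rcases hσ with rfl | hσ
      · exact Sym2.eq_swap ▸ hxS
      · exact hpS σ (edges_takeUntil_subset_edges p hxp hσ)
  · -- otherwise `xu` extends `p` to a longer path in `S`
    have hlen := hmax x w (cons hx.symm p) (hpath.cons hxp) fun σ hσ => by
      rw [edges_cons, List.mem_cons] at hσ
      rcases hσ with rfl | hσ
      · exact Sym2.eq_swap ▸ hxS
      · exact hpS σ hσ
    rw [length_cons] at hlen
    omega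

end LongestPath

lemma exists_isLongestPathIn {S : Set (Sym2 V)} {σ : Sym2 V} (hσ : σ ∈ G.edgeSet) (hσS : σ ∈ S) :
    ∃ (u w : V) (p : G.Walk u w), p.IsLongestPathIn S ∧ ¬ p.Nil := by
  induction σ using Sym2.ind with | _ a b =>
  let paths : Set (Σ u w, G.Path u w) := {P | ∀ σ ∈ P.2.2.1.edges, σ ∈ S}
  have hab : ⟨a, b, Path.singleton hσ⟩ ∈ paths := fun σ' hσ' => by
    rw [List.mem_singleton.mp hσ']
    exact hσS
  obtain ⟨⟨u, w, p⟩, hpS, hmax⟩ :=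
    Set.exists_max_image paths (fun P => P.2.2.1.length) (Set.toFinite _) ⟨_, hab⟩
  refine ⟨u, w, p, ⟨p.2, hpS, fun a b q hq hqS => hmax ⟨a, b, q, hq⟩ hqS⟩, ?_⟩
  exact not_nil_iff_lt_length.mpr (hmax _ hab)

lemma IsLongestPathIn.vsum_ne_zero {R : Type*} [AddCommMonoid R] {g : G.edgeSet → R}
    (hS : ¬ ∃ (z : V) (c : G.Walk z z), c.IsCycle ∧ ∀ σ ∈ c.edges, σ ∈ edgeSupport g)
    {u w : V} {p : G.Walk u w} (hp : p.IsLongestPathIn (edgeSupport g)) (hnil : ¬ p.Nil) :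
    vsum G g u ≠ 0 := by
  rw [vsum_eq_of_unique (e₀ := ⟨s(u, p.snd), p.adj_snd hnil⟩) (Sym2.mem_mk_left _ _)]
  · exact coe_mem_edgeSupport.mp (hp.2.1 _ (mk_start_snd_mem_edges hnil))
  intro e he hue
  obtain ⟨x, hx⟩ := Sym2.mem_iff_exists.mp hue
  have hsnd := hp.eq_snd hS (G.mem_edgeSet.mp (hx ▸ e.2)) (hx ▸ coe_mem_edgeSupport.mpr he)
  exact Subtype.ext (hx.trans (by rw [hsnd]))

lemma flow_entries_of_gcd_natAbs_eq_one {u w : V} {p : G.Walk u w} (hp : p.edges.Nodup) {t : ℤ}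
    (hgcd : Finset.univ.gcd (fun e => (p.flow t e).natAbs) = 1) :
    (∀ e, p.flow t e = -1 ∨ p.flow t e = 0 ∨ p.flow t e = 1) ∧
      (∀ e : G.edgeSet, p.flow t e ≠ 0 ↔ (e : Sym2 V) ∈ p.edges) ∧
      ∀ e : G.edgeSet, (e : Sym2 V) ∈ p.edges → p.flow t e = 1 ∨ p.flow t e = -1 := by
  have ht : t.natAbs = 1 := by
    refine Nat.dvd_one.mp (hgcd ▸ Finset.dvd_gcd fun e _ => ?_)
    by_cases he : (e : Sym2 V) ∈ p.edges
    · rcases flow_eq_or_eq_neg p hp t he with h | h <;> simp [h]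
    · simp [flow_eq_zero_of_notMem p t he]
  have hon (e : G.edgeSet) (he : (e : Sym2 V) ∈ p.edges) : p.flow t e = 1 ∨ p.flow t e = -1 := by
    rcases flow_eq_or_eq_neg p hp t he with h | h <;> omega
  refine ⟨fun e => ?_, fun e => ⟨fun h => by_contra fun he => h ?_, fun he => ?_⟩, hon⟩
  · by_cases he : (e : Sym2 V) ∈ p.edges
    · rcases hon e he with h | h <;> simp [h]
    · simp [flow_eq_zero_of_notMem p t he]
  · exact flow_eq_zero_of_notMem p t he
  · rcases hon e he with h | h <;> simp [h]

end SimpleGraph.Walk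

/-- The hypotheses say that the alternating vector `y` on `p` has `supp(By) ⊆ supp(Bg)`, so
minimality of the circuit `g` gives the reverse inclusion, which is the conclusion. -/
lemma IsCircuitFM.eq_zero_of_flow {g : G.edgeSet → ℤ} (hg : IsCircuitFM G fun e => (g e : ℝ))
    {u w : V} {p : G.Walk u w} (hnil : ¬ p.Nil) (hnd : p.edges.Nodup)
    (hpg : ∀ σ ∈ p.edges, σ ∈ edgeSupport g)
    (hv : ∀ v, G.degree v ≠ 1 → vsum G (p.flow (1 : ℤ)) v ≠ 0 → vsum G g v ≠ 0) :
    (∀ e : G.edgeSet, (e : Sym2 V) ∉ p.edges → g e = 0) ∧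
      ∀ v, G.degree v ≠ 1 → vsum G (p.flow (1 : ℤ)) v = 0 → vsum G g v = 0 := by
  set y : G.edgeSet → ℝ := fun e => ((p.flow 1 e : ℤ) : ℝ) with hy
  have hy0 : y ≠ 0 := fun hy0 => by
    let e₀ : G.edgeSet := ⟨_, edges_subset_edgeSet p (mk_start_snd_mem_edges hnil)⟩
    have h0 : p.flow (1 : ℤ) e₀ = 0 := by simpa [y] using congrFun hy0 e₀
    rcases flow_eq_or_eq_neg p hnd (1 : ℤ) (e := e₀) (mk_start_snd_mem_edges hnil) with h | h <;>
      omega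
  have hyg : SuppLE G y fun e => (g e : ℝ) := by
    refine ⟨fun e he => ?_, fun v hv₁ hvy => ?_⟩
    · refine Int.cast_ne_zero.mpr (coe_mem_edgeSupport.mp (hpg _ (by_contra fun hne => he ?_)))
      simp [y, flow_eq_zero_of_notMem p (1 : ℤ) hne]
    · rw [hy, vsum_intCast] at hvy
      rw [vsum_intCast]
      exact Int.cast_ne_zero.mpr (hv v hv₁ (Int.cast_ne_zero.mp hvy))
  have hgy : SuppLE G (fun e => (g e : ℝ)) y := by_contra fun h => hg.2 y hy0 ⟨hyg, h⟩
  refine ⟨fun e he => by_contra fun hge => hgy.1 e (Int.cast_ne_zero.mpr hge) ?_,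
    fun v hv₁ hvy => by_contra fun hvg => hgy.2 v hv₁ ?_ ?_⟩
  · simp [y, flow_eq_zero_of_notMem p (1 : ℤ) he]
  · rw [vsum_intCast]
    exact Int.cast_ne_zero.mpr hvg
  · rw [hy, vsum_intCast, hvy, Int.cast_zero]

lemma IsCircuitFM.eq_zero_of_isCycle {g : G.edgeSet → ℤ} (hg : IsCircuitFM G fun e => (g e : ℝ))
    {u : V} {c : G.Walk u u} (hc : c.IsCycle) (heven : Even c.length)
    (hcg : ∀ σ ∈ c.edges, σ ∈ edgeSupport g) :
    (∀ e : G.edgeSet, (e : Sym2 V) ∉ c.edges → g e = 0) ∧ ∀ v, vsum G g v = 0 := by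
  obtain ⟨hsupp, hzero⟩ := hg.eq_zero_of_flow hc.not_nil hc.edges_nodup hcg
    fun v _ h => absurd (hc.vsum_flow heven 1 v) h
  refine ⟨hsupp, fun v => ?_⟩
  by_cases hv : v ∈ c.support
  · exact hzero v (hc.one_lt_degree hv).ne' (hc.vsum_flow heven 1 v)
  · exact vsum_eq_zero fun e hve =>
      hsupp e fun he => hv (mem_support_of_mem_edges he hve)

lemma IsCircuitFM.eq_zero_of_isPath {g : G.edgeSet → ℤ} (hg : IsCircuitFM G fun e => (g e : ℝ))
    {u w : V} {p : G.Walk u w} (hp : p.IsPath) (hnil : ¬ p.Nil)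
    (hpg : ∀ σ ∈ p.edges, σ ∈ edgeSupport g) (hu : vsum G g u ≠ 0) (hw : vsum G g w ≠ 0) :
    (∀ e : G.edgeSet, (e : Sym2 V) ∉ p.edges → g e = 0) ∧
      ∀ x ∈ p.support, x ≠ u → x ≠ w → vsum G g x = 0 := by
  obtain ⟨hsupp, hzero⟩ := hg.eq_zero_of_flow hnil hp.isTrail.edges_nodup hpg fun v _ hv => by
    rw [hp.vsum_flow] at hv
    by_cases hvu : v = u
    · exact hvu ▸ hu
    by_cases hvw : v = w
    · exact hvw ▸ hw
    simp [hvu, hvw] at hv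
  exact ⟨hsupp, fun x hx hxu hxw =>
    hzero x (hp.one_lt_degree hx hxu hxw).ne' (by simp [hp.vsum_flow, hxu, hxw])⟩

end

theorem circuits_of_bipartite_fractional_matching_polytope
    (hbip : ∃ f : V → Bool, ∀ a b : V, G.Adj a b → f a ≠ f b)
    (g : G.edgeSet → ℤ) (hg : g ∈ CircFM G) :
    (∀ e : G.edgeSet, g e = -1 ∨ g e = 0 ∨ g e = 1) ∧ (g ∈ C1 G ∨ g ∈ C3 G) := by
  obtain ⟨hgcd, hcirc⟩ := hg
  by_cases hcyc : ∃ (u : V) (c : G.Walk u u), c.IsCycle ∧ ∀ σ ∈ c.edges, σ ∈ edgeSupport g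
  · obtain ⟨u, c, hc, hcg⟩ := hcyc
    obtain ⟨f, hf⟩ := hbip
    have heven : Even c.length :=
      ((Coloring.mk f fun h => hf _ _ h).even_length_iff_congr c).mpr Iff.rfl
    obtain ⟨hsupp, hzero⟩ := hcirc.eq_zero_of_isCycle hc heven hcg
    obtain ⟨t, rfl⟩ := hc.exists_eq_flow hsupp hzero
    obtain ⟨hvals, hsupp', hpm⟩ := flow_entries_of_gcd_natAbs_eq_one hc.edges_nodup hgcd
    exact ⟨hvals, Or.inl ⟨u, c, hc, heven, hsupp', hpm, hzero⟩⟩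
  · obtain ⟨e₀, he₀⟩ : ∃ e, g e ≠ 0 := by
      by_contra! h
      exact hcirc.1 (funext fun e => by simp [h e])
    obtain ⟨u, w, p, hp, hnil⟩ := exists_isLongestPathIn e₀.2 (coe_mem_edgeSupport.mpr he₀)
    obtain ⟨hsupp, hint⟩ := hcirc.eq_zero_of_isPath hp.1 hnil hp.2.1 (hp.vsum_ne_zero hcyc hnil)
      (hp.reverse.vsum_ne_zero hcyc (nil_reverse.not.mpr hnil))
    obtain ⟨t, rfl⟩ := hp.1.exists_eq_flow hsupp hint
    obtain ⟨hvals, hsupp', hpm⟩ := flow_entries_of_gcd_natAbs_eq_one hp.1.isTrail.edges_nodup hgcd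
    exact ⟨hvals, Or.inr ⟨u, w, p, hp.1, not_nil_iff_lt_length.mp hnil, hsupp', hpm, hint⟩⟩
end
end

section
/- Let G be a simple graph containing no even cycle, and let C and D be two distinct odd cycles in G. Then |V(C) ∩ V(D)| ≤ 1. Equivalently, if a simple graph contains two distinct odd cycles sharing at least two vertices, then it contains an even cycle. -/
/-!
Suppose the cycles `c` and `d` meet in two vertices `a ≠ b` and `d` has an edge `e` not on `c`.
The `a`–`b` arc of `d` through `e` leaves `c` somewhere, and the stretch of it between leaving
and returning is an ear `P` of `c`: a path joining two distinct vertices of `c` and otherwise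
disjoint from it. `P` closes up with either of the two arcs of `c` between its ends, and the two
resulting cycles have total length `|c| + 2|P|`. So if `c` is odd, one of them is even.
-/

namespace SimpleGraph

variable {V : Type*} {G : SimpleGraph V}

namespace Walk

variable {u x y p q : V}

theorem IsPath.start_notMem_tail_support {P : G.Walk p q} (hP : P.IsPath) :
    p ∉ P.support.tail := by
  have h := hP.support_nodup
  rw [← cons_tail_support, List.nodup_cons] at h
  exact h.1

-- Diestel's `H`-path.
structure IsEar (P : G.Walk p q) (H : G.Subgraph) : Prop where
  isPath : P.IsPath
  ne : p ≠ q
  start_mem : p ∈ H.verts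
  end_mem : q ∈ H.verts
  edges_notMem : ∀ e ∈ P.edges, e ∉ H.edgeSet
  eq_or_eq_of_mem : ∀ v ∈ P.support, v ∈ H.verts → v = p ∨ v = q

theorem IsCycle.exists_isPath_append {c : G.Walk u u} (hc : c.IsCycle)
    (hx : x ∈ c.support) (hy : y ∈ c.support) (hxy : x ≠ y) :
    ∃ (P : G.Walk x y) (Q : G.Walk y x), P.IsPath ∧ Q.IsPath ∧
      (P.append Q).length = c.length ∧ (P.append Q).toSubgraph = c.toSubgraph := by
  classical
  have hr : (c.rotate x hx).IsCycle := hc.rotate hx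
  have hy' : y ∈ (c.rotate x hx).support := (mem_support_rotate_iff ..).mpr hy
  have hsplit := hr
  rw [← take_spec _ hy'] at hsplit
  refine ⟨_, _, hr.isPath_takeUntil hy', hsplit.isPath_of_append_right (not_nil_of_ne hxy), ?_, ?_⟩
  · rw [take_spec, length_rotate]
  · rw [take_spec, toSubgraph_rotate]

theorem IsCycle.exists_isPath_mem_edges {c : G.Walk u u} (hc : c.IsCycle)
    (hx : x ∈ c.support) (hy : y ∈ c.support) (hxy : x ≠ y) {e : Sym2 V} (he : e ∈ c.edges) :
    ∃ W : G.Walk x y, W.IsPath ∧ e ∈ W.edges := by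
  obtain ⟨P, Q, hP, hQ, -, hPQ⟩ := hc.exists_isPath_append hx hy hxy
  rw [← mem_edges_toSubgraph, ← hPQ, mem_edges_toSubgraph, edges_append, List.mem_append] at he
  rcases he with he | he
  · exact ⟨P, hP, he⟩
  · exact ⟨Q.reverse, hQ.reverse, by rwa [edges_reverse, List.mem_reverse]⟩

theorem exists_eq_append_first_mem (S : Set V) (W : G.Walk x y) (hy : y ∈ S) :
    ∃ (z : V) (P : G.Walk x z) (R : G.Walk z y),
      z ∈ S ∧ (∀ v ∈ P.support, v ∈ S → v = z) ∧ W = P.append R := by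
  induction W with
  | nil => exact ⟨_, nil, nil, hy, by simp, rfl⟩
  | @cons x x₁ y h W ih =>
    by_cases hx : x ∈ S
    · exact ⟨x, nil, cons h W, hx, by simp, rfl⟩
    obtain ⟨z, P, R, hz, hP, rfl⟩ := ih hy
    refine ⟨z, cons h P, R, hz, ?_, rfl⟩
    rintro v (_ | ⟨_, hv⟩) hvS
    · exact absurd hvS hx
    · exact hP v hv hvS

theorem isEar_cons {H : G.Subgraph} (h : G.Adj x y) {P : G.Walk y q} (hP : P.IsPath)
    (hxP : x ∉ P.support) (hx : x ∈ H.verts) (hq : q ∈ H.verts) (hxy : s(x, y) ∉ H.edgeSet)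
    (hPH : ∀ v ∈ P.support, v ∈ H.verts → v = q) : (cons h P).IsEar H where
  isPath := hP.cons hxP
  ne := by rintro rfl; exact hxP P.end_mem_support
  start_mem := hx
  end_mem := hq
  edges_notMem := by
    rintro e (_ | ⟨_, he⟩) heH
    · exact hxy heH
    · induction e using Sym2.ind with
      | _ v w =>
      have hv := hPH v (P.fst_mem_support_of_mem_edges he) (H.edge_vert heH)
      have hw := hPH w (P.snd_mem_support_of_mem_edges he) (H.edge_vert (H.adj_symm heH))
      exact (P.adj_of_mem_edges he).ne (hv.trans hw.symm)
  eq_or_eq_of_mem := by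
    rintro v (_ | ⟨_, hv⟩) hvH
    · exact .inl rfl
    · exact .inr (hPH v hv hvH)

theorem IsPath.exists_isEar {H : G.Subgraph} {W : G.Walk x y} (hW : W.IsPath)
    (hx : x ∈ H.verts) (hy : y ∈ H.verts) {e : Sym2 V} (he : e ∈ W.edges)
    (heH : e ∉ H.edgeSet) : ∃ (p q : V) (P : G.Walk p q), P.IsEar H := by
  induction W with
  | nil => simp at he
  | @cons x x₁ y h W ih =>
    rw [cons_isPath_iff] at hW
    by_cases hH : s(x, x₁) ∈ H.edgeSet
    · refine ih hW.1 (H.edge_vert (H.adj_symm hH)) hy ?_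
      rcases List.mem_cons.mp he with rfl | he
      · exact absurd hH heH
      · exact he
    obtain ⟨z, P, R, hz, hP, rfl⟩ := W.exists_eq_append_first_mem H.verts hy
    have hxP : x ∉ P.support := fun hxP => hW.2 (support_subset_support_append_left P R hxP)
    exact ⟨x, z, cons h P, isEar_cons h hW.1.of_append_left hxP hx hz hH hP⟩

theorem IsEar.isCycle_append {c : G.Walk u u} {P : G.Walk p q} (hP : P.IsEar c.toSubgraph)
    {Q : G.Walk q p} (hQ : Q.IsPath) (hQc : Q.toSubgraph ≤ c.toSubgraph) :
    (P.append Q).IsCycle := by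
  refine hP.isPath.isCycle_append hQ ?_ ?_
  · intro v hvP hvQ
    have hvc : v ∈ c.toSubgraph.verts :=
      hQc.1 ((mem_verts_toSubgraph Q).mpr (List.mem_of_mem_tail hvQ))
    rcases hP.eq_or_eq_of_mem v (List.mem_of_mem_tail hvP) hvc with rfl | rfl
    · exact hP.isPath.start_notMem_tail_support hvP
    · exact hQ.start_notMem_tail_support hvQ
  · by_contra! hlen
    have hPQ : P = Q.reverse := eq_of_length_le_one hlen.1 (by simpa using hlen.2)
    obtain ⟨e, he⟩ := List.exists_mem_of_ne_nil _ (edges_eq_nil.not.mpr (not_nil_of_ne hP.ne))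
    refine hP.edges_notMem e he (Subgraph.edgeSet_mono hQc ?_)
    rwa [mem_edges_toSubgraph, ← List.mem_reverse, ← edges_reverse, ← hPQ]

theorem IsCycle.exists_isCycle_append_of_isEar {c : G.Walk u u} (hc : c.IsCycle)
    {P : G.Walk p q} (hP : P.IsEar c.toSubgraph) :
    ∃ Q₁ Q₂ : G.Walk q p, (P.append Q₁).IsCycle ∧ (P.append Q₂).IsCycle ∧
      Q₁.length + Q₂.length = c.length := by
  obtain ⟨Q₁, Q₂, hQ₁, hQ₂, hlen, hsub⟩ := hc.exists_isPath_append
    ((mem_verts_toSubgraph c).mp hP.end_mem) ((mem_verts_toSubgraph c).mp hP.start_mem) hP.ne.symm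
  rw [toSubgraph_append] at hsub
  refine ⟨Q₁, Q₂.reverse, hP.isCycle_append hQ₁ (hsub ▸ le_sup_left),
    hP.isCycle_append hQ₂.reverse (by rw [toSubgraph_reverse, ← hsub]; exact le_sup_right), ?_⟩
  rwa [length_reverse, ← length_append]

theorem IsCycle.exists_even_isCycle_of_isEar {c : G.Walk u u} (hc : c.IsCycle)
    (hodd : Odd c.length) {P : G.Walk p q} (hP : P.IsEar c.toSubgraph) :
    ∃ (x : V) (C : G.Walk x x), C.IsCycle ∧ Even C.length := by
  obtain ⟨Q₁, Q₂, hC₁, hC₂, hlen⟩ := hc.exists_isCycle_append_of_isEar hP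
  rcases Nat.even_or_odd (P.append Q₁).length with h₁ | h₁
  · exact ⟨p, _, hC₁, h₁⟩
  · refine ⟨p, _, hC₂, ?_⟩
    rw [length_append, Nat.even_iff]
    rw [length_append, Nat.odd_iff] at h₁
    rw [← hlen, Nat.odd_iff] at hodd
    omega

theorem IsCycle.exists_even_isCycle_of_meet_twice {w a b : V} {c : G.Walk u u}
    {d : G.Walk w w} (hc : c.IsCycle) (hodd : Odd c.length) (hd : d.IsCycle) {e : Sym2 V}
    (hed : e ∈ d.edges) (hec : e ∉ c.edges) (hac : a ∈ c.support) (had : a ∈ d.support)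
    (hbc : b ∈ c.support) (hbd : b ∈ d.support) (hab : a ≠ b) :
    ∃ (x : V) (C : G.Walk x x), C.IsCycle ∧ Even C.length := by
  obtain ⟨W, hW, heW⟩ := hd.exists_isPath_mem_edges had hbd hab hed
  obtain ⟨p, q, P, hP⟩ := hW.exists_isEar (H := c.toSubgraph)
    ((mem_verts_toSubgraph c).mpr hac) ((mem_verts_toSubgraph c).mpr hbc) heW
    (by rwa [mem_edges_toSubgraph])
  exact hc.exists_even_isCycle_of_isEar hodd hP

end Walk

end SimpleGraph

/-- in a simple graph containing no even cycle, any two distinct odd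
cycles share at most one vertex. -/
theorem odd_cycles_share_at_most_one_vertex
    {V : Type*} [DecidableEq V] (G : SimpleGraph V)
    (hnoeven : ∀ (v : V) (e : G.Walk v v), e.IsCycle → ¬ Even e.length)
    (u w : V) (c : G.Walk u u) (d : G.Walk w w)
    (hc : c.IsCycle) (hd : d.IsCycle)
    (hcodd : Odd c.length) (hdodd : Odd d.length)
    (hdist : c.edges.toFinset ≠ d.edges.toFinset) :
    ∀ a b : V, a ∈ c.support → a ∈ d.support → b ∈ c.support → b ∈ d.support → a = b := by
  intro a b hac had hbc hbd
  by_contra hab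
  obtain ⟨e, ⟨hed, hec⟩ | ⟨hec, hed⟩⟩ :
      ∃ e, (e ∈ d.edges ∧ e ∉ c.edges) ∨ (e ∈ c.edges ∧ e ∉ d.edges) := by
    by_contra! h
    exact hdist (Finset.ext fun e => by simpa only [List.mem_toFinset] using ⟨(h e).2, (h e).1⟩)
  · obtain ⟨x, C, hC, heven⟩ :=
      hc.exists_even_isCycle_of_meet_twice hcodd hd hed hec hac had hbc hbd hab
    exact hnoeven x C hC heven
  · obtain ⟨x, C, hC, heven⟩ :=
      hd.exists_even_isCycle_of_meet_twice hdodd hc hec hed had hac hbd hbc hab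
    exact hnoeven x C hC heven
end

section
/- Let v ∈ ker(A) with v ≠ 0. Then v can be written as v = Σ_{i=1}^{k} αᵢ gⁱ where k ≤ n, each gⁱ ∈ C(A,B), each αᵢ ≥ 0, and for every i: gⁱ and v are sign-compatible with respect to B (i.e., (Bgⁱ)(j)·(Bv)(j) ≥ 0 for every row index j) and supp(Bgⁱ) ⊆ supp(Bv). -/
open Matrix

noncomputable section

variable {n mA mB : ℕ}

/-- The real matrix obtained from an integer matrix. -/
def rmat {m k : Type*} (M : Matrix m k ℤ) : Matrix m k ℝ := M.map (fun z => (z : ℝ))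

/-- `g` is a circuit of the system `Ax = b, Bx ≤ d`:  `g` is a nonzero kernel element of `A`
whose image `Bg` is support-minimal among `{By : y ∈ ker A, y ≠ 0}`. -/
def IsCircuit (A : Matrix (Fin mA) (Fin n) ℤ) (B : Matrix (Fin mB) (Fin n) ℤ)
    (g : Fin n → ℝ) : Prop :=
  g ≠ 0 ∧ (rmat A).mulVec g = 0 ∧
    ∀ y : Fin n → ℝ, y ≠ 0 → (rmat A).mulVec y = 0 →
      ¬ ({i | (rmat B).mulVec y i ≠ 0} ⊂ {i | (rmat B).mulVec g i ≠ 0})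

/-- The set `C(A,B)` of circuits, normalized to have coprime integer components. -/
def CAB (A : Matrix (Fin mA) (Fin n) ℤ) (B : Matrix (Fin mB) (Fin n) ℤ) :
    Set (Fin n → ℝ) :=
  {g | IsCircuit A B g ∧ ∃ gz : Fin n → ℤ, (∀ i, g i = (gz i : ℝ)) ∧
        Finset.univ.gcd (fun i => (gz i).natAbs) = 1}

/-!
The rank condition makes `B` injective on `ker A`. Among the nonzero `y ∈ ker A` conformal to `x`
(`By` agrees in sign with `Bx` and has support inside that of `Bx`), one of least support is a
circuit: a kernel element of strictly smaller support would, by a ratio test, yield a conformal one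
of even smaller support. Subtracting from `x` the largest multiple `t g` of such a circuit that
keeps `x - t g` conformal to `x` kills a coordinate of `Bg`, so `g` leaves the space
`{y ∈ ker A | supp By ⊆ supp B(x - t g)}` and its dimension drops; hence at most `n` circuits are
needed. A circuit spans the real kernel of the integer matrix formed by `A` and the rows of `B`
vanishing on it, so it is a real multiple of an integer vector, which we divide by the gcd of its
entries.
-/

open Function Module

section Conformal

variable {R ι : Type*} [CommRing R] [LinearOrder R] [IsStrictOrderedRing R]

def ConformalTo (u w : ι → R) : Prop :=
  support u ⊆ support w ∧ ∀ j, 0 ≤ u j * w j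

theorem ConformalTo.refl (u : ι → R) : ConformalTo u u :=
  ⟨subset_rfl, fun j => mul_self_nonneg (u j)⟩

theorem ConformalTo.trans {u v w : ι → R} (huv : ConformalTo u v) (hvw : ConformalTo v w) :
    ConformalTo u w := by
  refine ⟨huv.1.trans hvw.1, fun j => ?_⟩
  rcases eq_or_ne (v j) 0 with hv | hv
  · simp [notMem_support.1 fun h => notMem_support.2 hv (huv.1 h)]
  · have : 0 ≤ (u j * w j) * (v j * v j) := by
      calc 0 ≤ (u j * v j) * (v j * w j) := mul_nonneg (huv.2 j) (hvw.2 j)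
        _ = (u j * w j) * (v j * v j) := by ring
    exact nonneg_of_mul_nonneg_left this (mul_self_pos.2 hv)

theorem ConformalTo.smul_left {u w : ι → R} (h : ConformalTo u w) {c : R} (hc : 0 ≤ c) :
    ConformalTo (c • u) w :=
  ⟨(support_const_smul_subset c u).trans h.1, fun j => by
    simpa [mul_assoc] using mul_nonneg hc (h.2 j)⟩

end Conformal

section RatioTest

variable {𝕜 ι : Type*} [Field 𝕜] [LinearOrder 𝕜] [IsStrictOrderedRing 𝕜] [Finite ι]

theorem exists_pos_conformalTo_sub_smul {u w : ι → 𝕜} (hsupp : support u ⊆ support w)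
    {j₀ : ι} (h₀ : 0 < u j₀ * w j₀) :
    ∃ t : 𝕜, 0 < t ∧ ConformalTo (w - t • u) w ∧ ∃ j, u j ≠ 0 ∧ (w - t • u) j = 0 := by
  classical
  cases nonempty_fintype ι
  -- `t` is the least ratio `w j / u j` over the coordinates where `u` and `w` have the same sign
  obtain ⟨j, hj, hmin⟩ := Finset.exists_min_image {j | 0 < u j * w j} (fun j => w j / u j)
    ⟨j₀, by simpa using h₀⟩
  replace hj : 0 < u j * w j := by simpa using hj
  have hu : u j ≠ 0 := left_ne_zero_of_mul hj.ne'
  have ht : 0 < w j / u j := by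
    rw [← mul_div_mul_left (w j) (u j) hu]
    exact div_pos hj (mul_self_pos.2 hu)
  refine ⟨w j / u j, ht, ⟨fun i hi => ?_, fun i => ?_⟩, j, hu, ?_⟩
  · contrapose! hi
    simp [notMem_support.1 hi, notMem_support.1 fun h => hi (hsupp h)]
  · have key : w j / u j * (u i * w i) ≤ w i * w i := by
      by_cases hi : 0 < u i * w i
      · calc w j / u j * (u i * w i) ≤ w i / u i * (u i * w i) :=
              mul_le_mul_of_nonneg_right (hmin i (by simpa using hi)) hi.le
          _ = w i * w i := by field_simp [left_ne_zero_of_mul hi.ne']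
      · nlinarith [mul_self_nonneg (w i)]
    simp only [Pi.sub_apply, Pi.smul_apply, smul_eq_mul]
    linarith
  · simp only [Pi.sub_apply, Pi.smul_apply, smul_eq_mul]
    field_simp
    ring

end RatioTest

section SupportMinimal

variable {𝕜 V ι : Type*} [Field 𝕜] [AddCommGroup V] [Module 𝕜 V]
  {K : Submodule 𝕜 V} {f : V →ₗ[𝕜] ι → 𝕜}

def IsSupportMinimal (K : Submodule 𝕜 V) (f : V →ₗ[𝕜] ι → 𝕜) (g : V) : Prop :=
  g ≠ 0 ∧ g ∈ K ∧ ∀ y ≠ 0, y ∈ K → ¬ support (f y) ⊂ support (f g)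

theorem support_nonempty_of_disjoint_ker (hf : Disjoint K (LinearMap.ker f)) {y : V} (hy : y ∈ K)
    (hy0 : y ≠ 0) : (support (f y)).Nonempty :=
  support_nonempty_iff.2 fun h => hy0 (Submodule.disjoint_def.1 hf y hy h)

theorem IsSupportMinimal.smul {g : V} (hg : IsSupportMinimal K f g) {c : 𝕜} (hc : c ≠ 0) :
    IsSupportMinimal K f (c • g) := by
  obtain ⟨hg0, hgK, hmin⟩ := hg
  refine ⟨smul_ne_zero hc hg0, K.smul_mem c hgK, fun y hy0 hyK => ?_⟩
  rw [map_smul, support_const_smul_of_ne_zero _ _ hc]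
  exact hmin y hy0 hyK

theorem IsSupportMinimal.exists_eq_smul (hf : Disjoint K (LinearMap.ker f)) {g y : V}
    (hg : IsSupportMinimal K f g) (hyK : y ∈ K) (hy : support (f y) ⊆ support (f g)) :
    ∃ a : 𝕜, y = a • g := by
  obtain ⟨j, hj⟩ := support_nonempty_of_disjoint_ker hf hg.2.1 hg.1
  refine ⟨f y j / f g j, sub_eq_zero.1 (by_contra fun hne => hg.2.2 _ hne ?_ ?_)⟩
  · exact K.sub_mem hyK (K.smul_mem _ hg.2.1)
  · -- subtracting the right multiple of `g` clears the coordinate `j`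
    refine ⟨fun i hi => ?_, fun hsub => ?_⟩
    · contrapose! hi
      simp [notMem_support.1 hi, notMem_support.1 fun h => hi (hy h)]
    · have := hsub hj
      simp [mem_support, div_mul_cancel₀ _ (mem_support.1 hj)] at this

def supportedSubspace (K : Submodule 𝕜 V) (f : V →ₗ[𝕜] ι → 𝕜) (s : Set ι) : Submodule 𝕜 V :=
  K ⊓ (Submodule.pi sᶜ fun _ => ⊥).comap f

theorem mem_supportedSubspace {s : Set ι} {y : V} :
    y ∈ supportedSubspace K f s ↔ y ∈ K ∧ support (f y) ⊆ s := by
  simp [supportedSubspace, Set.subset_def, not_imp_comm]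

theorem supportedSubspace_mono {s t : Set ι} (hst : s ⊆ t) :
    supportedSubspace K f s ≤ supportedSubspace K f t := fun _ hy =>
  mem_supportedSubspace.2 ⟨(mem_supportedSubspace.1 hy).1, (mem_supportedSubspace.1 hy).2.trans hst⟩

variable [LinearOrder 𝕜] [IsStrictOrderedRing 𝕜]

theorem exists_isSupportMinimal_conformalTo [Finite ι] (hf : Disjoint K (LinearMap.ker f)) {x : V}
    (hxK : x ∈ K) (hx0 : x ≠ 0) : ∃ g, IsSupportMinimal K f g ∧ ConformalTo (f g) (f x) := by
  obtain ⟨g, ⟨hg0, hgK, hgx⟩, hmin⟩ := (measure fun y => (support (f y)).ncard).wf.has_min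
    {y | y ≠ 0 ∧ y ∈ K ∧ ConformalTo (f y) (f x)} ⟨x, hx0, hxK, ConformalTo.refl _⟩
  refine ⟨g, ⟨hg0, hgK, fun y hy0 hyK hyg => ?_⟩, hgx⟩
  wlog hpos : ∃ j, 0 < f y j * f g j generalizing y
  · obtain ⟨j, hj⟩ := support_nonempty_of_disjoint_ker hf hyK hy0
    refine this (-y) (neg_ne_zero.2 hy0) (K.neg_mem hyK) (by rwa [map_neg, support_neg]) ⟨j, ?_⟩
    have hne : f y j * f g j ≠ 0 := mul_ne_zero hj (hyg.subset hj)
    simp only [map_neg, Pi.neg_apply, neg_mul, neg_pos]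
    exact lt_of_le_of_ne (not_lt.1 fun h => hpos ⟨j, h⟩) hne
  obtain ⟨j₀, h₀⟩ := hpos
  obtain ⟨t, ht, hconf, j, hyj, hj⟩ := exists_pos_conformalTo_sub_smul hyg.subset h₀
  have hfg : f (g - t • y) = f g - t • f y := by simp
  have hlt : support (f (g - t • y)) ⊂ support (f g) :=
    hfg ▸ ⟨hconf.1, fun h => h (hyg.subset hyj) hj⟩
  refine hmin (g - t • y) ⟨fun h0 => ?_, K.sub_mem hgK (K.smul_mem t hyK), hfg ▸ hconf.trans hgx⟩
    (Set.ncard_lt_ncard hlt)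
  rw [sub_eq_zero.1 h0, map_smul, support_const_smul_of_ne_zero _ _ ht.ne'] at hyg
  exact hyg.ne rfl

theorem exists_conformal_decomposition [FiniteDimensional 𝕜 V] [Finite ι]
    (hf : Disjoint K (LinearMap.ker f)) {x : V} (hxK : x ∈ K) :
    ∃ k ≤ finrank 𝕜 (supportedSubspace K f (support (f x))),
      ∃ (g : Fin k → V) (α : Fin k → 𝕜), x = ∑ i, α i • g i ∧
        ∀ i, IsSupportMinimal K f (g i) ∧ 0 ≤ α i ∧ ConformalTo (f (g i)) (f x) := by
  induction hd : finrank 𝕜 (supportedSubspace K f (support (f x))) using Nat.strong_induction_on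
    generalizing x with
  | _ d ih =>
  rcases eq_or_ne x 0 with rfl | hx0
  · exact ⟨0, Nat.zero_le d, Fin.elim0, Fin.elim0, by simp, nofun⟩
  obtain ⟨g, hg, hgx⟩ := exists_isSupportMinimal_conformalTo hf hxK hx0
  obtain ⟨j₀, hj₀⟩ := support_nonempty_of_disjoint_ker hf hg.2.1 hg.1
  have h₀ : 0 < f g j₀ * f x j₀ :=
    (hgx.2 j₀).lt_of_ne' (mul_ne_zero hj₀ (hgx.1 hj₀))
  obtain ⟨t, ht, hconf, j, hgj, hj⟩ := exists_pos_conformalTo_sub_smul hgx.1 h₀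
  set x' := x - t • g with hx'
  have hfx' : f x' = f x - t • f g := by simp [hx']
  have hx'K : x' ∈ K := K.sub_mem hxK (K.smul_mem t hg.2.1)
  have hlt : supportedSubspace K f (support (f x')) < supportedSubspace K f (support (f x)) := by
    refine SetLike.lt_iff_le_and_exists.2 ⟨supportedSubspace_mono (hfx' ▸ hconf.1), g,
      mem_supportedSubspace.2 ⟨hg.2.1, hgx.1⟩, fun hg' => ?_⟩
    exact (mem_supportedSubspace.1 hg').2 hgj (hfx' ▸ hj)
  obtain ⟨k, hk, g', α, hsum, hg'⟩ :=
    ih _ (hd ▸ Submodule.finrank_lt_finrank_of_lt hlt) hx'K rfl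
  refine ⟨k + 1, hd ▸ (Submodule.finrank_lt_finrank_of_lt hlt).trans_le' hk, Fin.cons g g',
    Fin.cons t α, ?_, Fin.cases ⟨hg, ht.le, hgx⟩ fun i => ?_⟩
  · rw [Fin.sum_univ_succ, Fin.cons_zero, Fin.cons_zero]
    simp only [Fin.cons_succ]
    rw [← hsum, hx', add_sub_cancel]
  · obtain ⟨hgi, hαi, hconfi⟩ := hg' i
    exact ⟨hgi, hαi, hconfi.trans (hfx' ▸ hconf)⟩

end SupportMinimal

theorem Matrix.disjoint_ker_mulVecLin_of_rank_fromRows {R m₁ m₂ ι : Type*} [Field R] [Fintype ι]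
    (M₁ : Matrix m₁ ι R) (M₂ : Matrix m₂ ι R) (h : (fromRows M₁ M₂).rank = Fintype.card ι) :
    Disjoint (LinearMap.ker M₁.mulVecLin) (LinearMap.ker M₂.mulVecLin) := by
  have hker : LinearMap.ker (fromRows M₁ M₂).mulVecLin = ⊥ := by
    have := (fromRows M₁ M₂).mulVecLin.finrank_range_add_finrank_ker
    rw [finrank_fintype_fun_eq_card, ← rank, h] at this
    exact Submodule.finrank_eq_zero.1 (by omega)
  refine Submodule.disjoint_def.2 fun x h₁ h₂ => ker_mulVecLin_eq_bot_iff.1 hker x ?_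
  rw [fromRows_mulVec, show M₁ *ᵥ x = 0 from h₁, show M₂ *ᵥ x = 0 from h₂, Sum.elim_zero_zero]

-- The Gram matrix `Mᵀ * M` is square with the same kernel as `M`, so its determinant decides.
theorem Matrix.exists_mulVec_eq_zero_of_map {A B m ι : Type*} [CommRing A] [LinearOrder A]
    [IsStrictOrderedRing A] [CommRing B] [IsDomain B] [Fintype m] [Fintype ι] {φ : A →+* B}
    (hφ : Injective φ) (M : Matrix m ι A) {x : ι → B} (hx0 : x ≠ 0) (hx : M.map φ *ᵥ x = 0) :
    ∃ z ≠ 0, M *ᵥ z = 0 := by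
  classical
  have hdet : φ (Mᵀ * M).det = φ 0 := by
    rw [RingHom.map_det, RingHom.mapMatrix_apply, Matrix.map_mul, transpose_map, map_zero]
    exact exists_mulVec_eq_zero_iff.1 ⟨x, hx0, by rw [← mulVec_mulVec, hx, mulVec_zero]⟩
  obtain ⟨z, hz0, hz⟩ := exists_mulVec_eq_zero_iff.2 (hφ hdet)
  refine ⟨z, hz0, ?_⟩
  have := congrArg (z ⬝ᵥ ·) hz
  rwa [← mulVec_mulVec, dotProduct_mulVec, vecMul_transpose, dotProduct_zero,
    dotProduct_self_eq_zero] at this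

theorem exists_gcd_natAbs_eq_one_smul_eq {ι : Type*} [Fintype ι] {z : ι → ℤ} (hz : z ≠ 0) :
    ∃ (d : ℕ) (w : ι → ℤ), Finset.univ.gcd (fun i => (w i).natAbs) = 1 ∧ z = (d : ℤ) • w := by
  set d := Finset.univ.gcd fun i => (z i).natAbs
  obtain ⟨i, hi⟩ := Function.ne_iff.1 hz
  have hd : ∀ i, (d : ℤ) ∣ z i := fun i => Int.natCast_dvd.2 (Finset.gcd_dvd (Finset.mem_univ i))
  refine ⟨d, fun i => z i / d, ?_, funext fun i => (Int.mul_ediv_cancel' (hd i)).symm⟩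
  simp_rw [Int.natAbs_ediv_of_dvd (hd _), Int.natAbs_natCast]
  exact Finset.gcd_div_eq_one (Finset.mem_univ i) (Int.natAbs_ne_zero.2 hi)

section Circuit

variable {A : Matrix (Fin mA) (Fin n) ℤ} {B : Matrix (Fin mB) (Fin n) ℤ}
  {g : Fin n → ℝ}

theorem rmat_fromRows {m₁ m₂ k : Type*} (M₁ : Matrix m₁ k ℤ) (M₂ : Matrix m₂ k ℤ) :
    rmat (fromRows M₁ M₂) = fromRows (rmat M₁) (rmat M₂) :=
  fromRows_map ..

theorem isCircuit_iff_isSupportMinimal :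
    IsCircuit A B g ↔ IsSupportMinimal (LinearMap.ker (rmat A).mulVecLin) (rmat B).mulVecLin g :=
  Iff.rfl

theorem IsCircuit.exists_eq_smul_intCast
    (hf : Disjoint (LinearMap.ker (rmat A).mulVecLin) (LinearMap.ker (rmat B).mulVecLin))
    (hg : IsCircuit A B g) : ∃ (a : ℝ) (z : Fin n → ℤ), z ≠ 0 ∧ g = a • fun i => (z i : ℝ) := by
  -- `g` spans the real kernel of the integer matrix formed by `A` and the rows of `B`
  -- on which `Bg` vanishes
  let M := fromRows A (B.submatrix ((↑) : {j // (rmat B *ᵥ g) j = 0} → Fin mB) _root_.id)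
  have hM : ∀ y, rmat M *ᵥ y = 0 ↔ y ∈ LinearMap.ker (rmat A).mulVecLin ∧
      support (rmat B *ᵥ y) ⊆ support (rmat B *ᵥ g) := by
    intro y
    rw [rmat_fromRows, fromRows_mulVec, ← Sum.elim_zero_zero, Sum.elim_eq_iff, LinearMap.mem_ker]
    exact and_congr_right' ⟨fun h j hy hg => hy (congrFun h ⟨j, hg⟩),
      fun h => funext fun j => not_not.1 fun hy => h hy j.2⟩
  obtain ⟨z, hz0, hz⟩ := M.exists_mulVec_eq_zero_of_map (φ := Int.castRingHom ℝ) Int.cast_injective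
    hg.1 ((hM g).2 ⟨hg.2.1, subset_rfl⟩)
  set y : Fin n → ℝ := fun i => (z i : ℝ)
  have hy : rmat M *ᵥ y = 0 := by
    ext j
    have := RingHom.map_mulVec (Int.castRingHom ℝ) M z j
    rw [hz] at this
    simpa [rmat, y, Function.comp_def] using this.symm
  obtain ⟨hyA, hyB⟩ := (hM y).1 hy
  obtain ⟨a, ha⟩ := (isCircuit_iff_isSupportMinimal.1 hg).exists_eq_smul hf hyA hyB
  have ha0 : a ≠ 0 := by
    rintro rfl
    exact hz0 (funext fun i => by simpa [y] using congrFun ha i)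
  exact ⟨a⁻¹, z, hz0, by rw [eq_inv_smul_iff₀ ha0]; exact ha.symm⟩

theorem IsCircuit.smul (hg : IsCircuit A B g) {c : ℝ} (hc : c ≠ 0) : IsCircuit A B (c • g) :=
  isCircuit_iff_isSupportMinimal.2 ((isCircuit_iff_isSupportMinimal.1 hg).smul hc)

theorem IsCircuit.exists_pos_smul_mem_CAB
    (hf : Disjoint (LinearMap.ker (rmat A).mulVecLin) (LinearMap.ker (rmat B).mulVecLin))
    (hg : IsCircuit A B g) : ∃ c : ℝ, 0 < c ∧ ∃ g' ∈ CAB A B, g = c • g' := by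
  have normalize : ∀ (c : ℝ) (w : Fin n → ℤ), 0 < c → g = c • (fun i => (w i : ℝ)) →
      Finset.univ.gcd (fun i => (w i).natAbs) = 1 → ∃ c : ℝ, 0 < c ∧ ∃ g' ∈ CAB A B, g = c • g' :=
    fun c w hc hgw hw => ⟨c, hc, _,
      ⟨by simpa [hgw, smul_smul, hc.ne'] using hg.smul (inv_ne_zero hc.ne'), w, fun _ => rfl, hw⟩,
      hgw⟩
  obtain ⟨a, z, hz0, hgz⟩ := hg.exists_eq_smul_intCast hf
  obtain ⟨d, w, hw, rfl⟩ := exists_gcd_natAbs_eq_one_smul_eq hz0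
  have hgw : g = (a * d) • fun i => (w i : ℝ) := by
    rw [hgz, mul_smul]
    congr 1
    ext i
    simp
  have had : a * d ≠ 0 := fun h => hg.1 (by rw [hgw, h, zero_smul])
  rcases had.lt_or_gt with hneg | hpos
  · exact normalize (-(a * d)) (-w) (neg_pos.2 hneg) (by rw [hgw]; ext; simp)
      (by simpa using hw)
  · exact normalize (a * d) w hpos hgw hw

end Circuit

theorem sign_compatible_representation_general
    (A : Matrix (Fin mA) (Fin n) ℤ) (B : Matrix (Fin mB) (Fin n) ℤ)
    (hAB : (rmat (Matrix.fromRows A B)).rank = n)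
    (v : Fin n → ℝ) (hker : (rmat A).mulVec v = 0) :
    ∃ k : ℕ, k ≤ n ∧ ∃ (g : Fin k → (Fin n → ℝ)) (α : Fin k → ℝ),
      v = ∑ i, α i • g i ∧
      ∀ i : Fin k,
        g i ∈ CAB A B ∧
        0 ≤ α i ∧
        (∀ j, 0 ≤ ((rmat B).mulVec (g i) j) * ((rmat B).mulVec v j)) ∧
        {j | (rmat B).mulVec (g i) j ≠ 0} ⊆ {j | (rmat B).mulVec v j ≠ 0} := by
  have hf : Disjoint (LinearMap.ker (rmat A).mulVecLin) (LinearMap.ker (rmat B).mulVecLin) :=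
    disjoint_ker_mulVecLin_of_rank_fromRows _ _ (by rw [← rmat_fromRows, hAB, Fintype.card_fin])
  obtain ⟨k, hk, g, α, rfl, hg⟩ := exists_conformal_decomposition hf hker
  choose c hc g' hg' hgc using fun i =>
    (isCircuit_iff_isSupportMinimal.2 (hg i).1).exists_pos_smul_mem_CAB hf
  refine ⟨k, hk.trans ((Submodule.finrank_le _).trans (finrank_fin_fun ℝ).le), g',
    fun i => α i * c i, by simp_rw [hgc, smul_smul],
    fun i => ⟨hg' i, mul_nonneg (hg i).2.1 (hc i).le, ?_⟩⟩
  have := ((hg i).2.2).smul_left (inv_nonneg.2 (hc i).le)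
  rw [hgc i, map_smul, inv_smul_smul₀ (hc i).ne'] at this
  exact ⟨this.2, this.1⟩

/-- sign-compatible representation property of circuits.
Every nonzero `v ∈ ker A` is a nonnegative combination of at most `n` circuits, each of
which is sign-compatible with `v` with respect to `B` and has `supp(Bgⁱ) ⊆ supp(Bv)`. -/
theorem sign_compatible_representation
    (A : Matrix (Fin mA) (Fin n) ℤ) (B : Matrix (Fin mB) (Fin n) ℤ)
    (hmB : 1 ≤ mB)
    (hA : (rmat A).rank = mA)
    (hAB : (rmat (Matrix.fromRows A B)).rank = n)
    (v : Fin n → ℝ) (hv : v ≠ 0) (hker : (rmat A).mulVec v = 0) :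
    ∃ k : ℕ, k ≤ n ∧ ∃ (g : Fin k → (Fin n → ℝ)) (α : Fin k → ℝ),
      v = ∑ i, α i • g i ∧
      ∀ i : Fin k,
        g i ∈ CAB A B ∧
        0 ≤ α i ∧
        (∀ j, 0 ≤ ((rmat B).mulVec (g i) j) * ((rmat B).mulVec v j)) ∧
        {j | (rmat B).mulVec (g i) j ≠ 0} ⊆ {j | (rmat B).mulVec v j ≠ 0} :=
  sign_compatible_representation_general A B hAB v hker
end
end

section
/- Let P = {x ∈ ℝⁿ : Ax = b, Bx ≤ d} be bounded (a polytope) and let c ∈ ℤⁿ. For every feasible point x̄ ∈ P there exist k ≤ n and a sequence x̄ = x₀, x₁, …, x_k such that each x_{i+1} = x_i + αᵢ gᵢ is a maximal augmentation along a circuit gᵢ ∈ C(A,B) with cᵀgᵢ ≤ 0, the point x_k is an extreme point (vertex) of P, and cᵀx_k ≤ cᵀx̄. -/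
noncomputable section

variable {n mA mB : ℕ}

/-- The real vector obtained from an integer vector. -/
def rvec {m : Type*} (v : m → ℤ) : m → ℝ := fun i => (v i : ℝ)

/-- The feasible region `P = {x : Ax = b, Bx ≤ d}`. -/
def Pset (A : Matrix (Fin mA) (Fin n) ℤ) (B : Matrix (Fin mB) (Fin n) ℤ)
    (b : Fin mA → ℤ) (d : Fin mB → ℤ) : Set (Fin n → ℝ) :=
  {x | (rmat A).mulVec x = rvec b ∧ ∀ i, (rmat B).mulVec x i ≤ (d i : ℝ)}

/-- `cᵀx` for an integer objective `c` and a real point `x`. -/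
def dotIC (c : Fin n → ℤ) (x : Fin n → ℝ) : ℝ := ∑ i, (c i : ℝ) * x i

/-- The 1-norm of a vector. -/
def norm1 (x : Fin n → ℝ) : ℝ := ∑ i, |x i|

/-- `α g` is a maximal augmentation at `x` (within `P`). -/
def IsMaxAug (P : Set (Fin n → ℝ)) (x g : Fin n → ℝ) (α : ℝ) : Prop :=
  0 < α ∧ x + α • g ∈ P ∧ ∀ ε : ℝ, 0 < ε → x + (α + ε) • g ∉ P

/-- `δ`: the largest absolute value of the determinant of an `n × n` submatrix of the
stacked matrix `(A; B)`. -/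
def deltaMax (A : Matrix (Fin mA) (Fin n) ℤ) (B : Matrix (Fin mB) (Fin n) ℤ) : ℝ :=
  sSup {r : ℝ | ∃ f : Fin n → (Fin mA ⊕ Fin mB), Function.Injective f ∧
        r = |((((Matrix.fromRows A B).submatrix f id).det : ℤ) : ℝ)|}

/-- `x` minimizes `cᵀ·` over `P`. -/
def IsMinimizer (P : Set (Fin n → ℝ)) (c : Fin n → ℤ) (x : Fin n → ℝ) : Prop :=
  x ∈ P ∧ ∀ y ∈ P, dotIC c x ≤ dotIC c y

/-!
Let `K(x)` be the space of directions that keep `Ax` fixed and keep every constraint of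
`Bx ≤ d` that is tight at `x` tight. If `K(x) = 0`, then `x` is a vertex of `P`. Otherwise a
nonzero `y ∈ K(x)` contains in its `B`-support that of a circuit `g`; since the system is
integral, `g` can be taken integral and primitive, and after a sign change `cᵀg ≤ 0`. As `g`
lies in `K(x)` and `P` is compact, there is a maximal step `x + αg`, and at that point some
constraint that was slack at `x` has become tight (otherwise the step could be extended), so
`K` strictly shrinks. Hence a vertex is reached after at most `dim K(x̄) ≤ n` steps, none of
which increases `cᵀx`.
-/

open Matrix Filter Topology

lemma rmat_mulVec_rvec {ι κ : Type*} [Fintype κ] (M : Matrix ι κ ℤ) (v : κ → ℤ) :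
    rmat M *ᵥ rvec v = rvec (M *ᵥ v) :=
  funext fun i => ((Int.castRingHom ℝ).map_mulVec M v i).symm

lemma mulVec_add_smul {ι κ : Type*} [Fintype κ] (M : Matrix ι κ ℝ) (x g : κ → ℝ) (t : ℝ)
    (i : ι) : (M *ᵥ (x + t • g)) i = (M *ᵥ x) i + t * (M *ᵥ g) i := by
  simp [mulVec_add, mulVec_smul]

lemma rvec_injective {κ : Type*} : Function.Injective (rvec : (κ → ℤ) → κ → ℝ) :=
  fun _ _ h => funext fun i => Int.cast_injective (congrFun h i)

lemma rvec_eq_zero {κ : Type*} {v : κ → ℤ} : rvec v = 0 ↔ v = 0 :=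
  rvec_injective.eq_iff' (funext fun _ => Int.cast_zero)

lemma exists_int_mulVec_eq_zero {ι κ : Type*} [Fintype ι] [Fintype κ] [DecidableEq κ]
    (M : Matrix ι κ ℤ) {v : κ → ℝ} (hv : v ≠ 0) (hMv : rmat M *ᵥ v = 0) :
    ∃ w : κ → ℤ, w ≠ 0 ∧ M *ᵥ w = 0 := by
  -- the Gram matrix `Mᵀ M` is square, so a real kernel vector makes its integer determinant vanish
  have hdet : (Mᵀ * M).det = 0 := by
    have hreal : (rmat (Mᵀ * M)).det = 0 := by
      refine exists_mulVec_eq_zero_iff.mp ⟨v, hv, ?_⟩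
      rw [show rmat (Mᵀ * M) = (rmat M)ᵀ * rmat M from
        (Matrix.map_mul (f := Int.castRingHom ℝ)).trans (by rw [transpose_map]; rfl),
        ← mulVec_mulVec, hMv, mulVec_zero]
    exact Int.cast_eq_zero.mp (((Int.castRingHom ℝ).map_det (Mᵀ * M)).trans hreal)
  obtain ⟨w, hw, hMMw⟩ := exists_mulVec_eq_zero_iff.mpr hdet
  refine ⟨w, hw, dotProduct_self_eq_zero.mp ?_⟩
  calc (M *ᵥ w) ⬝ᵥ (M *ᵥ w) = w ⬝ᵥ (Mᵀ * M) *ᵥ w := by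
        rw [← mulVec_mulVec, dotProduct_mulVec w Mᵀ, vecMul_transpose]
    _ = 0 := by rw [hMMw, dotProduct_zero]

lemma exists_primitive_smul_eq {κ : Type*} [Fintype κ] (w : κ → ℤ) (hw : w ≠ 0) :
    ∃ N : ℤ, N ≠ 0 ∧ ∃ v : κ → ℤ, w = N • v ∧ Finset.univ.gcd (fun i => (v i).natAbs) = 1 := by
  set N := Finset.univ.gcd fun i => (w i).natAbs
  have hN : N ≠ 0 := fun h => hw <| funext fun i =>
    Int.natAbs_eq_zero.mp (Finset.gcd_eq_zero_iff.mp h i (Finset.mem_univ i))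
  choose v hv using fun i => Int.natCast_dvd.mpr (Finset.gcd_dvd (Finset.mem_univ i) :
    N ∣ (w i).natAbs)
  refine ⟨N, by exact_mod_cast hN, v, funext hv,
    Nat.eq_of_mul_eq_mul_left (Nat.pos_of_ne_zero hN) ?_⟩
  have hw_abs : (fun i => (w i).natAbs) = fun i => N * (v i).natAbs :=
    funext fun i => by rw [hv i, Int.natAbs_mul, Int.natAbs_natCast]
  calc N * Finset.univ.gcd (fun i => (v i).natAbs)
      = Finset.univ.gcd (fun i => N * (v i).natAbs) := by rw [Finset.gcd_mul_left, normalize_eq]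
    _ = N * 1 := by rw [← hw_abs, mul_one]

section Circuits

variable {A : Matrix (Fin mA) (Fin n) ℤ} {B : Matrix (Fin mB) (Fin n) ℤ}

lemma IsCircuit.of_support_subset {z y : Fin n → ℝ} (hz : IsCircuit A B z) (hy : y ≠ 0)
    (hAy : rmat A *ᵥ y = 0) (hsub : {i | (rmat B *ᵥ y) i ≠ 0} ⊆ {i | (rmat B *ᵥ z) i ≠ 0}) :
    IsCircuit A B y :=
  ⟨hy, hAy, fun w hw hAw hss => hz.2.2 w hw hAw (hss.trans_subset hsub)⟩

lemma exists_isCircuit_support_subset {y : Fin n → ℝ} (hy : y ≠ 0) (hAy : rmat A *ᵥ y = 0) :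
    ∃ z, IsCircuit A B z ∧ {i | (rmat B *ᵥ z) i ≠ 0} ⊆ {i | (rmat B *ᵥ y) i ≠ 0} := by
  obtain ⟨_, ⟨z, hz, hAz, rfl, hsub⟩, hmin⟩ := Set.Finite.exists_minimal (Set.toFinite
    {s : Set (Fin mB) | ∃ z, z ≠ 0 ∧ rmat A *ᵥ z = 0 ∧ s = {i | (rmat B *ᵥ z) i ≠ 0} ∧
      s ⊆ {i | (rmat B *ᵥ y) i ≠ 0}}) ⟨_, y, hy, hAy, rfl, subset_rfl⟩
  refine ⟨z, ⟨hz, hAz, fun w hw hAw hss => hss.not_subset ?_⟩, hsub⟩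
  exact hmin ⟨w, hw, hAw, rfl, hss.subset.trans hsub⟩ hss.subset

lemma IsCircuit.exists_mem_CAB {z : Fin n → ℝ} (hz : IsCircuit A B z) :
    ∃ g ∈ CAB A B, {i | (rmat B *ᵥ g) i ≠ 0} ⊆ {i | (rmat B *ᵥ z) i ≠ 0} := by
  classical
  set M := fromRows A (Matrix.of fun (i : {i // (rmat B *ᵥ z) i = 0}) => B i)
  have hM : ∀ v, rmat M *ᵥ v = Sum.elim (rmat A *ᵥ v) fun i => (rmat B *ᵥ v) i.1 :=
    fun v => funext (by rintro (i | i) <;> rfl)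
  have hMz : rmat M *ᵥ z = 0 := by
    rw [hM, hz.2.1]
    ext (i | ⟨i, hi⟩)
    exacts [rfl, hi]
  obtain ⟨w, hw, hMw⟩ := exists_int_mulVec_eq_zero M hz.1 hMz
  obtain ⟨N, hN, v, rfl, hgcd⟩ := exists_primitive_smul_eq w hw
  have hMv : rmat M *ᵥ rvec v = 0 := by
    rw [mulVec_smul] at hMw
    rw [rmat_mulVec_rvec, (smul_eq_zero.mp hMw).resolve_left hN, rvec_eq_zero]
  rw [hM] at hMv
  have hsupp : {i | (rmat B *ᵥ rvec v) i ≠ 0} ⊆ {i | (rmat B *ᵥ z) i ≠ 0} :=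
    fun i hi hzi => hi (congrFun hMv (.inr ⟨i, hzi⟩))
  have hv : rvec v ≠ 0 := by
    rw [Ne, rvec_eq_zero]
    rintro rfl
    exact hw (smul_zero N)
  exact ⟨rvec v, ⟨hz.of_support_subset hv (funext fun i => congrFun hMv (.inl i)) hsupp,
    v, fun _ => rfl, hgcd⟩, hsupp⟩

lemma exists_mem_CAB_support_subset {y : Fin n → ℝ} (hy : y ≠ 0) (hAy : rmat A *ᵥ y = 0) :
    ∃ g ∈ CAB A B, {i | (rmat B *ᵥ g) i ≠ 0} ⊆ {i | (rmat B *ᵥ y) i ≠ 0} := by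
  obtain ⟨z, hz, hzy⟩ := exists_isCircuit_support_subset (B := B) hy hAy
  obtain ⟨g, hg, hgz⟩ := hz.exists_mem_CAB
  exact ⟨g, hg, hgz.trans hzy⟩

lemma neg_mem_CAB {g : Fin n → ℝ} (hg : g ∈ CAB A B) : -g ∈ CAB A B := by
  obtain ⟨hcirc, gz, hgz, hgcd⟩ := hg
  refine ⟨hcirc.of_support_subset (neg_ne_zero.mpr hcirc.1)
    (by rw [mulVec_neg, hcirc.2.1, neg_zero]) (by simp [mulVec_neg]), -gz, fun i => ?_, ?_⟩
  · simp [hgz i]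
  · simpa using hgcd

end Circuits

lemma dotIC_add_smul (c : Fin n → ℤ) (x g : Fin n → ℝ) (α : ℝ) :
    dotIC c (x + α • g) = dotIC c x + α * dotIC c g := by
  simp only [dotIC, Pi.add_apply, Pi.smul_apply, smul_eq_mul, Finset.mul_sum,
    ← Finset.sum_add_distrib]
  exact Finset.sum_congr rfl fun i _ => by ring

lemma dotIC_neg (c : Fin n → ℤ) (g : Fin n → ℝ) : dotIC c (-g) = -dotIC c g := by
  simp [dotIC]

lemma exists_isMaxAug {P : Set (Fin n → ℝ)} (hP : IsCompact P) {x g : Fin n → ℝ} (hg : g ≠ 0)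
    {t : ℝ} (ht : 0 < t) (htP : x + t • g ∈ P) : ∃ α, IsMaxAug P x g α := by
  have hE : IsCompact ((fun s : ℝ => x + s • g) ⁻¹' P) :=
    ((Homeomorph.addLeft x).isClosedEmbedding.comp
      (isClosedEmbedding_smul_left hg)).isCompact_preimage hP
  have htα : t ≤ sSup ((fun s : ℝ => x + s • g) ⁻¹' P) := le_csSup hE.bddAbove htP
  refine ⟨_, ht.trans_le htα, hE.sSup_mem ⟨t, htP⟩, fun ε hε hεP => ?_⟩
  linarith [le_csSup hE.bddAbove hεP]

section Polyhedron

variable {A : Matrix (Fin mA) (Fin n) ℤ} {B : Matrix (Fin mB) (Fin n) ℤ}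
  {b : Fin mA → ℤ} {d : Fin mB → ℤ}

lemma isClosed_Pset : IsClosed (Pset A B b d) := by
  have hA : Continuous (rmat A *ᵥ ·) := continuous_const.matrix_mulVec continuous_id
  have hB : Continuous (rmat B *ᵥ ·) := continuous_const.matrix_mulVec continuous_id
  simp only [Pset, Set.ofPred_and, Set.ofPred_forall]
  exact (isClosed_eq hA continuous_const).inter
    (isClosed_iInter fun i => isClosed_le ((continuous_apply i).comp hB) continuous_const)

variable (A B d) in
def tightSubspace (x : Fin n → ℝ) : Submodule ℝ (Fin n → ℝ) :=
  LinearMap.ker (rmat A).mulVecLin ⊓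
    ⨅ (i) (_ : (rmat B *ᵥ x) i = d i), LinearMap.ker (LinearMap.proj i ∘ₗ (rmat B).mulVecLin)

lemma mem_tightSubspace {x z : Fin n → ℝ} :
    z ∈ tightSubspace A B d x ↔
      rmat A *ᵥ z = 0 ∧ ∀ i, (rmat B *ᵥ x) i = d i → (rmat B *ᵥ z) i = 0 := by
  simp [tightSubspace, Submodule.mem_iInf]

lemma eventually_add_smul_mem_Pset {x g : Fin n → ℝ} (hx : x ∈ Pset A B b d)
    (hg : g ∈ tightSubspace A B d x) : ∀ᶠ t in 𝓝 (0 : ℝ), x + t • g ∈ Pset A B b d := by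
  rw [mem_tightSubspace] at hg
  have hAx : ∀ t : ℝ, rmat A *ᵥ (x + t • g) = rvec b := fun t => by
    rw [mulVec_add, mulVec_smul, hg.1, smul_zero, add_zero, hx.1]
  suffices hB : ∀ᶠ t in 𝓝 (0 : ℝ), ∀ i, (rmat B *ᵥ (x + t • g)) i ≤ d i from
    hB.mono fun t ht => ⟨hAx t, ht⟩
  refine eventually_all.mpr fun i => ?_
  simp only [mulVec_add_smul]
  rcases (hx.2 i).eq_or_lt with htight | hslack
  · exact .of_forall fun t => by rw [hg.2 i htight, mul_zero, add_zero, htight]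
  · have hcont : Continuous fun t : ℝ => (rmat B *ᵥ x) i + t * (rmat B *ᵥ g) i := by fun_prop
    exact (hcont.tendsto 0).eventually (gt_mem_nhds (by simpa using hslack)) |>.mono
      fun _ => le_of_lt

lemma exists_pos_add_smul_mem_Pset {x g : Fin n → ℝ} (hx : x ∈ Pset A B b d)
    (hg : g ∈ tightSubspace A B d x) : ∃ t : ℝ, 0 < t ∧ x + t • g ∈ Pset A B b d := by
  have hpos : ∀ᶠ t in 𝓝[>] (0 : ℝ), x + t • g ∈ Pset A B b d :=
    nhdsWithin_le_nhds (eventually_add_smul_mem_Pset hx hg)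
  exact (hpos.and self_mem_nhdsWithin).exists.imp fun _ ht => ⟨ht.2, ht.1⟩

lemma tightSubspace_add_smul_le {x g : Fin n → ℝ} (hg : g ∈ tightSubspace A B d x) (α : ℝ) :
    tightSubspace A B d (x + α • g) ≤ tightSubspace A B d x := by
  intro z hz
  rw [mem_tightSubspace] at hg hz ⊢
  refine ⟨hz.1, fun i hi => hz.2 i ?_⟩
  rw [mulVec_add_smul, hg.2 i hi, mul_zero, add_zero, hi]

lemma mem_extremePoints_of_tightSubspace_eq_bot {x : Fin n → ℝ} (hx : x ∈ Pset A B b d)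
    (hK : tightSubspace A B d x = ⊥) : x ∈ Set.extremePoints ℝ (Pset A B b d) := by
  refine mem_extremePoints.mpr ⟨hx, fun x₁ hx₁ x₂ hx₂ ⟨a₁, a₂, ha₁, ha₂, ha, hseg⟩ => ?_⟩
  -- a constraint tight at an inner point of a segment in `P` is tight at both its ends
  have hdiff : x₁ - x₂ ∈ tightSubspace A B d x := by
    refine mem_tightSubspace.mpr ⟨by rw [mulVec_sub, hx₁.1, hx₂.1, sub_self], fun i hi => ?_⟩
    have hcomb : a₁ * (rmat B *ᵥ x₁) i + a₂ * (rmat B *ᵥ x₂) i = d i := by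
      rw [← hi, ← hseg]
      simp [mulVec_add, mulVec_smul]
    have hslack : a₁ * (d i - (rmat B *ᵥ x₁) i) + a₂ * (d i - (rmat B *ᵥ x₂) i) = 0 := by
      linear_combination (d i : ℝ) * ha - hcomb
    obtain ⟨h₁, h₂⟩ := (add_eq_zero_iff_of_nonneg (mul_nonneg ha₁.le (sub_nonneg.2 (hx₁.2 i)))
      (mul_nonneg ha₂.le (sub_nonneg.2 (hx₂.2 i)))).mp hslack
    rw [mulVec_sub, Pi.sub_apply]
    linarith [(mul_eq_zero.mp h₁).resolve_left ha₁.ne', (mul_eq_zero.mp h₂).resolve_left ha₂.ne']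
  obtain rfl : x₁ = x₂ := sub_eq_zero.mp (by simpa [hK] using hdiff)
  rw [← add_smul, ha, one_smul] at hseg
  exact ⟨hseg, hseg⟩

lemma exists_circuit_step (c : Fin n → ℤ) (hP : IsCompact (Pset A B b d)) {x : Fin n → ℝ}
    (hx : x ∈ Pset A B b d) (hK : tightSubspace A B d x ≠ ⊥) :
    ∃ (g : Fin n → ℝ) (α : ℝ), g ∈ CAB A B ∧ dotIC c g ≤ 0 ∧ IsMaxAug (Pset A B b d) x g α ∧
      tightSubspace A B d (x + α • g) < tightSubspace A B d x := by
  obtain ⟨y, hyK, hy⟩ := Submodule.exists_mem_ne_zero_of_ne_bot hK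
  obtain ⟨hAy, hBy⟩ := mem_tightSubspace.mp hyK
  obtain ⟨g₀, hg₀, hsupp₀⟩ := exists_mem_CAB_support_subset (B := B) hy hAy
  obtain ⟨g, hg, hgc, hsupp⟩ : ∃ g ∈ CAB A B, dotIC c g ≤ 0 ∧
      {i | (rmat B *ᵥ g) i ≠ 0} ⊆ {i | (rmat B *ᵥ y) i ≠ 0} := by
    rcases le_total (dotIC c g₀) 0 with hc | hc
    · exact ⟨g₀, hg₀, hc, hsupp₀⟩
    · refine ⟨-g₀, neg_mem_CAB hg₀, by rw [dotIC_neg]; linarith, ?_⟩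
      simpa [mulVec_neg] using hsupp₀
  have hgK : g ∈ tightSubspace A B d x :=
    mem_tightSubspace.mpr ⟨hg.1.2.1, fun i hi => not_not.mp fun h => hsupp h (hBy i hi)⟩
  obtain ⟨t, ht, htP⟩ := exists_pos_add_smul_mem_Pset hx hgK
  obtain ⟨α, hα⟩ := exists_isMaxAug hP hg.1.1 ht htP
  refine ⟨g, α, hg, hgc, hα, (tightSubspace_add_smul_le hgK α).lt_of_ne fun hKeq => ?_⟩
  -- if no new constraint became tight, the step along `g` could be extended
  rw [← hKeq] at hgK
  obtain ⟨ε, hε, hεP⟩ := exists_pos_add_smul_mem_Pset hα.2.1 hgK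
  exact hα.2.2 ε hε (by rwa [add_smul, ← add_assoc])

variable (A B b d) in
def IsCircuitWalk (c : Fin n → ℤ) (x : ℕ → Fin n → ℝ) (k : ℕ) : Prop :=
  ∀ i < k, ∃ (g : Fin n → ℝ) (α : ℝ), g ∈ CAB A B ∧ dotIC c g ≤ 0 ∧
    IsMaxAug (Pset A B b d) (x i) g α ∧ x (i + 1) = x i + α • g

lemma IsCircuitWalk.cons {c : Fin n → ℤ} {xs : ℕ → Fin n → ℝ} {k : ℕ}
    (hw : IsCircuitWalk A B b d c xs k) {x g : Fin n → ℝ} {α : ℝ} (hg : g ∈ CAB A B)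
    (hgc : dotIC c g ≤ 0) (hα : IsMaxAug (Pset A B b d) x g α) (h0 : xs 0 = x + α • g) :
    IsCircuitWalk A B b d c (fun | 0 => x | i + 1 => xs i) (k + 1) := by
  rintro (_ | i) hi
  · exact ⟨g, α, hg, hgc, hα, h0⟩
  · exact hw i (by omega)

lemma IsCircuitWalk.dotIC_le {c : Fin n → ℤ} {x : ℕ → Fin n → ℝ} {k : ℕ}
    (hw : IsCircuitWalk A B b d c x k) : dotIC c (x k) ≤ dotIC c (x 0) := by
  induction k with
  | zero => exact le_rfl
  | succ k ih =>
    obtain ⟨g, α, -, hgc, hα, hstep⟩ := hw k k.lt_succ_self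
    rw [hstep, dotIC_add_smul]
    nlinarith [ih fun i hi => hw i (by omega), hα.1]

lemma exists_isCircuitWalk_mem_extremePoints (c : Fin n → ℤ) (hP : IsCompact (Pset A B b d))
    {x : Fin n → ℝ} (hx : x ∈ Pset A B b d) :
    ∃ k ≤ Module.finrank ℝ (tightSubspace A B d x), ∃ xs : ℕ → Fin n → ℝ, xs 0 = x ∧
      IsCircuitWalk A B b d c xs k ∧ xs k ∈ Set.extremePoints ℝ (Pset A B b d) := by
  induction h : Module.finrank ℝ (tightSubspace A B d x) using Nat.strong_induction_on
    generalizing x with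
  | _ r ih =>
  by_cases hK : tightSubspace A B d x = ⊥
  · exact ⟨0, r.zero_le, fun _ => x, rfl, fun i hi => absurd hi i.not_lt_zero,
      mem_extremePoints_of_tightSubspace_eq_bot hx hK⟩
  obtain ⟨g, α, hg, hgc, hα, hlt⟩ := exists_circuit_step c hP hx hK
  have hrank := Submodule.finrank_lt_finrank_of_lt hlt
  rw [h] at hrank
  obtain ⟨k, hk, xs, h0, hw, hext⟩ := ih _ hrank hα.2.1 rfl
  exact ⟨k + 1, by omega, _, rfl, hw.cons hg hgc hα h0, hext⟩

end Polyhedron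

theorem snap_to_vertex_general
    (A : Matrix (Fin mA) (Fin n) ℤ) (B : Matrix (Fin mB) (Fin n) ℤ)
    (b : Fin mA → ℤ) (d : Fin mB → ℤ) (c : Fin n → ℤ)
    (hbdd : Bornology.IsBounded (Pset A B b d))
    (xbar : Fin n → ℝ) (hxbar : xbar ∈ Pset A B b d) :
    ∃ k : ℕ, k ≤ n ∧ ∃ x : ℕ → (Fin n → ℝ),
      x 0 = xbar ∧
      (∀ i < k, ∃ (g : Fin n → ℝ) (α : ℝ), g ∈ CAB A B ∧ dotIC c g ≤ 0 ∧
        IsMaxAug (Pset A B b d) (x i) g α ∧ x (i + 1) = x i + α • g) ∧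
      x k ∈ Set.extremePoints ℝ (Pset A B b d) ∧
      dotIC c (x k) ≤ dotIC c xbar := by
  obtain ⟨k, hk, xs, h0, hwalk, hext⟩ := exists_isCircuitWalk_mem_extremePoints c
    (Metric.isCompact_of_isClosed_isBounded isClosed_Pset hbdd) hxbar
  have hdim : Module.finrank ℝ (tightSubspace A B d xbar) ≤ n := by
    simpa using (tightSubspace A B d xbar).finrank_le
  exact ⟨k, hk.trans hdim, xs, h0, hwalk, hext, h0 ▸ hwalk.dotIC_le⟩

/-- snapping to a vertex.  From any feasible point of a bounded polyhedron
one can reach a vertex of no larger objective value by at most `n` maximal augmentations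
along circuits `g` with `cᵀg ≤ 0`. -/
theorem snap_to_vertex
    (A : Matrix (Fin mA) (Fin n) ℤ) (B : Matrix (Fin mB) (Fin n) ℤ)
    (b : Fin mA → ℤ) (d : Fin mB → ℤ) (c : Fin n → ℤ)
    (hmB : 1 ≤ mB)
    (hA : (rmat A).rank = mA)
    (hAB : (rmat (Matrix.fromRows A B)).rank = n)
    (hbdd : Bornology.IsBounded (Pset A B b d))
    (xbar : Fin n → ℝ) (hxbar : xbar ∈ Pset A B b d) :
    ∃ k : ℕ, k ≤ n ∧ ∃ x : ℕ → (Fin n → ℝ),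
      x 0 = xbar ∧
      (∀ i < k, ∃ (g : Fin n → ℝ) (α : ℝ), g ∈ CAB A B ∧ dotIC c g ≤ 0 ∧
        IsMaxAug (Pset A B b d) (x i) g α ∧ x (i + 1) = x i + α • g) ∧
      x k ∈ Set.extremePoints ℝ (Pset A B b d) ∧
      dotIC c (x k) ≤ dotIC c xbar :=
  snap_to_vertex_general A B b d c hbdd xbar hxbar
end
end
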